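/- arXiv:1810.03395 — 2 statements merged into one kernel-verified Lean document; each statement's English description precedes it below -/
import Mathlib

section
/- Let (E, λ) be an M-labeled event structure over a trace alphabet M = (Σ, I). For any shortest (v0,v)-path π of G(E), the geodesic trace ⟨σ(π)⟩ consists exactly of all words σ(π') such that π' is a shortest (v0,v)-path of G(E). -/
/-- An event structure: a set of events with a causal partial order and a
conflict relation that is irreflexive, symmetric and hereditary, such that
every event has finitely many causes. -/
structure EventStructure (E : Type*) where
  le : E → E → Prop
  conflict : E → E → Prop
  le_refl : ∀ e, le e e
  le_trans : ∀ e₁ e₂ e₃, le e₁ e₂ → le e₂ e₃ → le e₁ e₃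
  le_antisymm : ∀ e₁ e₂, le e₁ e₂ → le e₂ e₁ → e₁ = e₂
  conflict_irrefl : ∀ e, ¬ conflict e e
  conflict_symm : ∀ e₁ e₂, conflict e₁ e₂ → conflict e₂ e₁
  conflict_le : ∀ e₁ e₂ e₃, conflict e₁ e₂ → le e₂ e₃ → conflict e₁ e₃
  finite_cause : ∀ e, Set.Finite {e' | le e' e}

namespace EventStructure

variable {E : Type*} (ES : EventStructure E)

/-- A configuration: a finite, downward-closed, conflict-free set of events. -/
abbrev IsConfig (c : Finset E) : Prop :=
  (∀ e ∈ c, ∀ e', ES.le e' e → e' ∈ c) ∧ ∀ e ∈ c, ∀ e' ∈ c, ¬ ES.conflict e e'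

/-- The type of configurations of an event structure. -/
abbrev Config : Type _ := {c : Finset E // ES.IsConfig c}

/-- `c'` is obtained from the configuration `c` by adding the single event `e`. -/
abbrev Extends (c c' : ES.Config) (e : E) : Prop :=
  e ∉ c.1 ∧ ∀ x, x ∈ c'.1 ↔ x = e ∨ x ∈ c.1

/-- `c'` is obtained from the configuration `c` by adding a single event. -/
abbrev Covers (c c' : ES.Config) : Prop := ∃ e, ES.Extends c c' e

/-- The (undirected) graph `G(E)` of the domain of an event structure:
vertices are configurations, edges join configurations differing in one event. -/
def configGraph : SimpleGraph ES.Config where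
  Adj c c' := ES.Covers c c' ∨ ES.Covers c' c
  symm := ⟨fun c c' h => Or.symm h⟩
  loopless := by
    constructor
    intro c h
    have key : ¬ ES.Covers c c := by
      rintro ⟨e, he, hmem⟩
      exact he ((hmem e).mpr (Or.inl rfl))
    exact h.elim key key

/-- The empty configuration, i.e. the basepoint `v₀` of the domain. -/
def emptyConfig : ES.Config :=
  ⟨∅, fun e he => absurd he (Finset.notMem_empty e),
      fun e he => absurd he (Finset.notMem_empty e)⟩

/-- Minimal conflict `e #_μ e'`. -/
abbrev MinConflict (e e' : E) : Prop :=
  ES.conflict e e' ∧ ¬ ∃ e'', e'' ≠ e ∧ e'' ≠ e' ∧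
    ((ES.le e'' e ∧ ES.conflict e'' e') ∨ (ES.le e'' e' ∧ ES.conflict e'' e))

/-- `e` is an immediate predecessor of `e'`. -/
abbrev ImmPred (e e' : E) : Prop :=
  ES.le e e' ∧ e ≠ e' ∧ ∀ e'', ES.le e e'' → ES.le e'' e' → e'' = e ∨ e'' = e'

/-- Two events are concurrent: order-incomparable and not in conflict. -/
abbrev Concurrent (e e' : E) : Prop :=
  ¬ ES.le e e' ∧ ¬ ES.le e' e ∧ ¬ ES.conflict e e'

/-- An event `e` is enabled at a configuration `c`. -/
abbrev Enabled (c : ES.Config) (e : E) : Prop := ∃ c' : ES.Config, ES.Extends c c' e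

end EventStructure

/-- The metric interval `I(u,v)` between two vertices of a graph. -/
abbrev mInterval {V : Type*} (G : SimpleGraph V) (u v : V) : Set V :=
  {x | G.dist u x + G.dist x v = G.dist u v}

open Classical in
/-- The label of the edge between two configurations (label of the unique event
in their symmetric difference). -/
noncomputable def stepLabel {E A : Type*} [Nonempty A] (lab : E → A)
    (c c' : Finset E) : A :=
  if h : ∃ e, (e ∈ c' ∧ e ∉ c) ∨ (e ∈ c ∧ e ∉ c') then lab h.choose
  else Classical.arbitrary A

/-- The word `σ(π)` of labels read along a walk of the domain graph. -/
noncomputable def walkWord {E A : Type*} [Nonempty A] {ES : EventStructure E}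
    (lab : E → A) {c c' : ES.Config} (p : ES.configGraph.Walk c c') : List A :=
  p.darts.map fun d => stepLabel lab d.toProd.1.1 d.toProd.2.1

/-- One elementary commutation step on words: exchange two adjacent independent
letters. -/
inductive SwapStep {A : Type*} (I : A → A → Prop) : List A → List A → Prop
  | swap (u v : List A) (a b : A) (h : I a b) :
      SwapStep I (u ++ a :: b :: v) (u ++ b :: a :: v)

/-- Mazurkiewicz trace equivalence `~_I`: the reflexive-transitive closure of
elementary commutations. -/
abbrev TraceEquiv {A : Type*} (I : A → A → Prop) : List A → List A → Prop :=
  Relation.ReflTransGen (SwapStep I)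

/-- `(ES, lab)` is an `M`-labeled event structure over the trace alphabet
`M = (A, I)` (axioms (LES1)-(LES3)). -/
structure IsTraceLabeling {E A : Type*} (ES : EventStructure E)
    (I : A → A → Prop) (lab : E → A) : Prop where
  les1 : ∀ e e', ES.MinConflict e e' → lab e ≠ lab e'
  les2 : ∀ e e', ES.ImmPred e e' ∨ ES.MinConflict e e' → ¬ I (lab e) (lab e')
  les3 : ∀ e e', ¬ I (lab e) (lab e') → ES.le e e' ∨ ES.le e' e ∨ ES.conflict e e'


section Aux

open Classical List

variable {E A : Type*} [Nonempty A]

/-- Downward-closed finite set of events. -/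
def DCl (ES : EventStructure E) (s : Finset E) : Prop :=
  ∀ f ∈ s, ∀ g, ES.le g f → g ∈ s

/-- A "good list": an enumeration of a configuration all of whose prefixes
are downward-closed. -/
def GoodL (ES : EventStructure E) (v : Finset E) (L : List E) : Prop :=
  L.Nodup ∧ L.toFinset = v ∧ ∀ i, DCl ES ((L.take i).toFinset)

lemma stepLabel_eq (lab : E → A) {c c' : Finset E} {e : E}
    (he : e ∉ c) (h : ∀ x, x ∈ c' ↔ x = e ∨ x ∈ c) :
    stepLabel lab c c' = lab e := by
  have hex : ∃ x, (x ∈ c' ∧ x ∉ c) ∨ (x ∈ c ∧ x ∉ c') :=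
    ⟨e, Or.inl ⟨(h e).mpr (Or.inl rfl), he⟩⟩
  unfold stepLabel
  rw [dif_pos hex]
  congr 1
  rcases hex.choose_spec with ⟨h1, h2⟩ | ⟨h1, h2⟩
  · rcases (h _).mp h1 with h3 | h3
    · exact h3
    · exact absurd h3 h2
  · exact absurd ((h _).mpr (Or.inr h1)) h2

lemma card_le_of_walk {ES : EventStructure E} :
    ∀ {c c' : ES.Config} (p : ES.configGraph.Walk c c'),
      c'.1.card ≤ c.1.card + p.length := by
  intro c c' p
  induction p with
  | nil => simp
  | @cons u b w h q ih =>
    have hb : b.1.card ≤ u.1.card + 1 := by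
      rcases h with ⟨e, he, hm⟩ | ⟨e, he, hm⟩
      · have hbe : b.1 = insert e u.1 := Finset.ext fun x => by simpa using hm x
        rw [hbe]
        exact Finset.card_insert_le _ _
      · have hsub : b.1 ⊆ u.1 := fun x hx => (hm x).mpr (Or.inr hx)
        exact le_trans (Finset.card_le_card hsub) (Nat.le_succ _)
    simp only [SimpleGraph.Walk.length_cons]
    omega

lemma exists_maximal (ES : EventStructure E) (s : Finset E) :
    s.Nonempty → ∃ e ∈ s, ∀ f ∈ s, ES.le e f → f = e := by
  classical
  induction s using Finset.strongInduction with
  | _ s ih =>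
    intro hs
    obtain ⟨x, hx⟩ := hs
    by_cases hmax : ∀ f ∈ s, ES.le x f → f = x
    · exact ⟨x, hx, hmax⟩
    · push_neg at hmax
      obtain ⟨f, hf, hxf, hfx⟩ := hmax
      have hts : s.filter (fun y => ES.le x y ∧ y ≠ x) ⊂ s :=
        Finset.filter_ssubset.mpr ⟨x, hx, fun h => h.2 rfl⟩
      have htne : (s.filter (fun y => ES.le x y ∧ y ≠ x)).Nonempty :=
        ⟨f, Finset.mem_filter.mpr ⟨hf, hxf, hfx⟩⟩
      obtain ⟨e, het, hemax⟩ := ih _ hts htne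
      obtain ⟨hes, hxe, hex⟩ := Finset.mem_filter.mp het
      refine ⟨e, hes, fun g hg heg => ?_⟩
      by_cases hge : g = e
      · exact hge
      · refine hemax g (Finset.mem_filter.mpr ⟨hg, ES.le_trans _ _ _ hxe heg, ?_⟩) heg
        rintro rfl
        exact hex (ES.le_antisymm _ _ heg hxe)

lemma DCl_erase {ES : EventStructure E} {s v : Finset E} {e : E}
    (hs : DCl ES s) (hsv : s ⊆ v) (hmax : ∀ f ∈ v, ES.le e f → f = e) :
    DCl ES (s.erase e) := by
  intro f hf g hg
  have hfs := Finset.mem_of_mem_erase hf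
  refine Finset.mem_erase.mpr ⟨?_, hs f hfs g hg⟩
  rintro rfl
  exact (Finset.mem_erase.mp hf).1 (hmax f (hsv hfs) hg)

lemma exists_goodL (ES : EventStructure E) :
    ∀ (n : ℕ) (v : Finset E), v.card = n → ES.IsConfig v → ∃ L, GoodL ES v L := by
  classical
  intro n
  induction n with
  | zero =>
    intro v hc _
    refine ⟨[], by simp [GoodL, DCl], ?_, fun i => by simp [DCl]⟩
    simp [Finset.card_eq_zero.mp hc]
  | succ n ih =>
    intro v hc hv
    have hne : v.Nonempty := Finset.card_pos.mp (by omega)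
    obtain ⟨e, hev, hmax⟩ := exists_maximal ES v hne
    have hv' : ES.IsConfig (v.erase e) :=
      ⟨DCl_erase hv.1 (fun _ h => h) hmax,
        fun a ha b hb => hv.2 a (Finset.mem_of_mem_erase ha) b (Finset.mem_of_mem_erase hb)⟩
    obtain ⟨L, hnd, htf, hdc⟩ := ih (v.erase e) (by rw [Finset.card_erase_of_mem hev, hc]; rfl) hv'
    have heL : e ∉ L := by
      intro h
      have : e ∈ v.erase e := htf ▸ List.mem_toFinset.mpr h
      simp at this
    have htf2 : (L ++ [e]).toFinset = v := by
      rw [List.toFinset_append, htf]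
      simp only [List.toFinset_cons, List.toFinset_nil, insert_empty_eq]
      rw [Finset.union_comm]; exact Finset.insert_erase hev
    refine ⟨L ++ [e], ?_, htf2, ?_⟩
    · simp [List.nodup_append, hnd, heL]
      rintro a ha rfl; exact heL ha
    · intro i
      rcases le_or_gt i L.length with h1 | h1
      · rw [List.take_append_of_le_length h1]
        exact hdc i
      · rw [List.take_of_length_le (by simp; omega), htf2]
        exact hv.1


lemma walk_of_goodL {ES : EventStructure E} (lab : E → A) :
    ∀ (L : List E) (v : ES.Config), GoodL ES v.1 L →
      ∃ p : ES.configGraph.Walk ES.emptyConfig v,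
        p.length = L.length ∧ walkWord lab p = L.map lab := by
  intro L
  induction L using List.reverseRecOn with
  | nil =>
    intro v h
    have hv : v = ES.emptyConfig := Subtype.ext (by simpa [EventStructure.emptyConfig] using h.2.1.symm)
    subst hv
    exact ⟨.nil, rfl, rfl⟩
  | append_singleton L e ih =>
    intro v h
    obtain ⟨hnd, htf, hdc⟩ := h
    have heL : e ∉ L := by
      simp [List.nodup_append] at hnd
      tauto
    have hLnd : L.Nodup := by
      simp [List.nodup_append] at hnd
      tauto
    have hev : e ∈ v.1 := htf ▸ (by simp)
    have htakeL : (L ++ [e]).take L.length = L := by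
      rw [List.take_append_of_le_length le_rfl, List.take_of_length_le le_rfl]
    have hdcL : DCl ES L.toFinset := by
      have := hdc L.length
      rwa [htakeL] at this
    have hmax : ∀ f ∈ v.1, ES.le e f → f = e := by
      intro f hf hef
      by_contra hne
      have hfL : f ∈ L.toFinset := by
        rw [← htf] at hf
        simp at hf
        rcases hf with hf | hf
        · exact absurd hf hne
        · exact List.mem_toFinset.mpr hf
      exact heL (List.mem_toFinset.mp (hdcL f hfL e hef))
    have hLtf : L.toFinset = v.1.erase e := by
      ext x
      simp only [List.mem_toFinset, Finset.mem_erase]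
      constructor
      · intro hx
        exact ⟨fun hxe => heL (hxe ▸ hx), htf ▸ (by simp [hx])⟩
      · rintro ⟨hxe, hxv⟩
        rw [← htf] at hxv
        simp at hxv
        tauto
    have hv' : ES.IsConfig (v.1.erase e) :=
      ⟨DCl_erase (v.2.1) (fun _ hh => hh) hmax,
        fun a ha b hb => v.2.2 a (Finset.mem_of_mem_erase ha) b (Finset.mem_of_mem_erase hb)⟩
    have hG' : GoodL ES (v.1.erase e) L := by
      refine ⟨hLnd, hLtf, fun i => ?_⟩
      rcases le_or_gt i L.length with h1 | h1
      · have := hdc i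
        rwa [List.take_append_of_le_length h1] at this
      · rw [List.take_of_length_le (le_of_lt h1)]
        exact hdcL
    obtain ⟨p, hpl, hpw⟩ := ih ⟨v.1.erase e, hv'⟩ hG'
    have hext : ES.Extends ⟨v.1.erase e, hv'⟩ v e := by
      refine ⟨by simp, fun x => ?_⟩
      simp only [Finset.mem_erase]
      constructor
      · intro hx
        by_cases hxe : x = e
        · exact Or.inl hxe
        · exact Or.inr ⟨hxe, hx⟩
      · rintro (rfl | ⟨_, hx⟩)
        · exact hev
        · exact hx
    have hadj : ES.configGraph.Adj ⟨v.1.erase e, hv'⟩ v := Or.inl ⟨e, hext⟩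
    refine ⟨p.concat hadj, ?_, ?_⟩
    · rw [SimpleGraph.Walk.length_concat, hpl]
      simp
    · unfold walkWord at hpw ⊢
      rw [SimpleGraph.Walk.darts_concat, List.concat_eq_append, List.map_append, hpw,
        List.map_append]
      simp only [List.map_cons, List.map_nil]
      rw [stepLabel_eq lab hext.1 hext.2]

lemma extract_goodL {ES : EventStructure E} (lab : E → A) {v : ES.Config} :
    ∀ {c : ES.Config} (p : ES.configGraph.Walk c v),
      c.1.card + p.length = v.1.card →
      ∃ L : List E, walkWord lab p = L.map lab ∧ L.Nodup ∧ (∀ x ∈ L, x ∉ c.1) ∧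
        c.1 ∪ L.toFinset = v.1 ∧ ∀ i, ES.IsConfig (c.1 ∪ (L.take i).toFinset) := by
  intro c p
  induction p with
  | @nil u =>
    intro _
    exact ⟨[], rfl, by simp, by simp, by simp, fun i => by simpa using u.2⟩
  | @cons u b w hadj q ih =>
    intro hcard
    simp only [SimpleGraph.Walk.length_cons] at hcard
    rcases hadj with ⟨e, he, hm⟩ | ⟨e, he, hm⟩
    · have hb1 : b.1 = insert e u.1 := Finset.ext fun x => by simpa using hm x
      have hcb : b.1.card = u.1.card + 1 := by
        rw [hb1, Finset.card_insert_of_notMem he]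
      obtain ⟨L, hw, hnd, hout, hun, hcfg⟩ := ih (by omega)
      have heb : e ∈ b.1 := (hm e).mpr (Or.inl rfl)
      refine ⟨e :: L, ?_, ?_, ?_, ?_, ?_⟩
      · show stepLabel lab u.1 b.1 :: walkWord lab q = List.map lab (e :: L)
        rw [stepLabel_eq lab he hm, hw, List.map_cons]
      · exact List.nodup_cons.mpr ⟨fun hc => hout e hc heb, hnd⟩
      · intro x hx
        rcases List.mem_cons.mp hx with rfl | hx
        · exact he
        · intro hxu
          exact hout x hx ((hm x).mpr (Or.inr hxu))
      · rw [← hun, hb1]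
        ext x
        simp
        try tauto
      · intro i
        cases i with
        | zero => simpa using u.2
        | succ i =>
          have := hcfg i
          have hset : u.1 ∪ ((e :: L).take (i+1)).toFinset = b.1 ∪ (L.take i).toFinset := by
            rw [hb1]
            ext x
            simp
            try tauto
          rw [hset]
          exact this
    · exfalso
      have hcu : u.1 = insert e b.1 := Finset.ext fun x => by simpa using hm x
      have : u.1.card = b.1.card + 1 := by
        rw [hcu, Finset.card_insert_of_notMem he]
      have hle := card_le_of_walk q
      omega

lemma dist_eq_card {ES : EventStructure E} (lab : E → A) (v : ES.Config) :
    ES.configGraph.dist ES.emptyConfig v = v.1.card := by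
  obtain ⟨L, hL⟩ := exists_goodL ES v.1.card v.1 rfl v.2
  obtain ⟨p, hpl, _⟩ := walk_of_goodL lab L v hL
  have hlen : L.length = v.1.card := by
    rw [← hL.2.1, List.toFinset_card_of_nodup hL.1]
  refine le_antisymm ((SimpleGraph.dist_le p).trans (by omega)) ?_
  obtain ⟨q, hq⟩ := SimpleGraph.Reachable.exists_walk_length_eq_dist ⟨p⟩
  have := card_le_of_walk q
  have hemp : (ES.emptyConfig (E := E)).1.card = 0 := rfl
  omega

section Traces

variable {I : A → A → Prop}

lemma swapStep_append_left (t : List A) {x y : List A} (h : SwapStep I x y) :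
    SwapStep I (t ++ x) (t ++ y) := by
  rcases h with ⟨u, w, a, b, hab⟩
  have := SwapStep.swap (I := I) (t ++ u) w a b hab
  simpa [List.append_assoc] using this

lemma swapStep_append_right (s : List A) {x y : List A} (h : SwapStep I x y) :
    SwapStep I (x ++ s) (y ++ s) := by
  rcases h with ⟨u, w, a, b, hab⟩
  have := SwapStep.swap (I := I) u (w ++ s) a b hab
  simpa [List.append_assoc] using this

lemma traceEquiv_append_left (t : List A) {x y : List A} (h : TraceEquiv I x y) :
    TraceEquiv I (t ++ x) (t ++ y) :=
  Relation.ReflTransGen.lift (fun z => t ++ z) (fun _ _ hh => swapStep_append_left t hh) _ _ h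

lemma traceEquiv_append_right (s : List A) {x y : List A} (h : TraceEquiv I x y) :
    TraceEquiv I (x ++ s) (y ++ s) :=
  Relation.ReflTransGen.lift (fun z => z ++ s) (fun _ _ hh => swapStep_append_right s hh) _ _ h

lemma bubble_right (a : A) :
    ∀ w : List A, (∀ b ∈ w, I a b) → TraceEquiv I (a :: w) (w ++ [a]) := by
  intro w
  induction w with
  | nil => intro _; exact Relation.ReflTransGen.refl
  | cons b w ih =>
    intro h
    have h1 : SwapStep I (a :: b :: w) (b :: a :: w) := by
      simpa using SwapStep.swap (I := I) [] w a b (h b (List.mem_cons_self))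
    refine Relation.ReflTransGen.head h1 ?_
    have h2 := traceEquiv_append_left [b] (ih (fun c hc => h c (List.mem_cons_of_mem _ hc)))
    simpa using h2

end Traces

lemma goodL_take_subset {ES : EventStructure E} {v : Finset E} {L : List E}
    (h : GoodL ES v L) (i : ℕ) : ((L.take i).toFinset : Finset E) ⊆ v := by
  intro x hx
  rw [← h.2.1]
  exact List.mem_toFinset.mpr (List.take_subset i L (List.mem_toFinset.mp hx))

lemma not_le_of_consec {ES : EventStructure E} {I : A → A → Prop} {lab : E → A}
    (hlab : IsTraceLabeling ES I lab) {v : Finset E} {L1 L2 : List E} {e e' : E}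
    (hg : GoodL ES v (L1 ++ e :: e' :: L2)) (hI : I (lab e) (lab e')) :
    ¬ ES.le e e' := by
  intro hle
  obtain ⟨hnd, htf, hdc⟩ := hg
  have heL1 : e ∉ L1 := by simp [List.nodup_append] at hnd; exact fun h => (hnd.2.2 e h).1 rfl
  have hne : e ≠ e' := by simp [List.nodup_append] at hnd; tauto
  have htake1 : (L1 ++ e :: e' :: L2).take L1.length = L1 := by
    rw [List.take_append_of_le_length le_rfl, List.take_of_length_le le_rfl]
  have htake2 : (L1 ++ e :: e' :: L2).take (L1.length + 2) = L1 ++ [e, e'] := by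
    rw [List.take_append, List.take_of_length_le (by omega)]
    congr 1
    simp
  have hdc1 : DCl ES L1.toFinset := by have := hdc L1.length; rwa [htake1] at this
  have hdc2 : DCl ES (L1 ++ [e, e']).toFinset := by
    have := hdc (L1.length + 2); rwa [htake2] at this
  have himm : ES.ImmPred e e' := by
    refine ⟨hle, hne, fun e'' h1 h2 => ?_⟩
    have he'mem : e' ∈ (L1 ++ [e, e']).toFinset := by simp
    have := hdc2 e' he'mem e'' h2
    simp only [List.toFinset_append, Finset.mem_union, List.mem_toFinset] at this
    rcases this with h3 | h3
    · exfalso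
      have : e ∈ L1.toFinset := hdc1 e'' (List.mem_toFinset.mpr h3) e h1
      exact heL1 (List.mem_toFinset.mp this)
    · simpa using h3
  exact hlab.les2 e e' (Or.inl himm) hI

lemma swap_goodL {ES : EventStructure E} {I : A → A → Prop} {lab : E → A}
    (hlab : IsTraceLabeling ES I lab) {v : Finset E} {L1 L2 : List E} {e e' : E}
    (hg : GoodL ES v (L1 ++ e :: e' :: L2)) (hI : I (lab e) (lab e')) :
    GoodL ES v (L1 ++ e' :: e :: L2) := by
  have hkey : ¬ ES.le e e' := not_le_of_consec hlab hg hI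
  obtain ⟨hnd, htf, hdc⟩ := hg
  have hperm : (L1 ++ e :: e' :: L2).Perm (L1 ++ e' :: e :: L2) :=
    List.Perm.append_left _ (List.Perm.swap _ _ _)
  refine ⟨hperm.nodup hnd, (List.toFinset_eq_of_perm _ _ hperm) ▸ htf, fun i => ?_⟩
  have htake1 : (L1 ++ e :: e' :: L2).take L1.length = L1 := by
    rw [List.take_append_of_le_length le_rfl, List.take_of_length_le le_rfl]
  have htake2 : (L1 ++ e :: e' :: L2).take (L1.length + 2) = L1 ++ [e, e'] := by
    rw [List.take_append, List.take_of_length_le (by omega)]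
    congr 1
    simp
  have hdc1 : DCl ES L1.toFinset := by have := hdc L1.length; rwa [htake1] at this
  have hdc2 : DCl ES (L1 ++ [e, e']).toFinset := by
    have := hdc (L1.length + 2); rwa [htake2] at this
  rcases le_or_gt i L1.length with h1 | h1
  · rw [List.take_append_of_le_length h1]
    have := hdc i
    rwa [List.take_append_of_le_length h1] at this
  rcases eq_or_lt_of_le (Nat.succ_le_of_lt h1) with h2 | h2
  · -- i = L1.length + 1
    have htake : (L1 ++ e' :: e :: L2).take i = L1 ++ [e'] := by
      rw [← h2, List.take_append, List.take_of_length_le (by omega)]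
      congr 1
      simp [Nat.succ_sub (le_refl L1.length)]
    rw [htake]
    intro f hf g hg
    simp only [List.toFinset_append, Finset.mem_union, List.mem_toFinset] at hf ⊢
    rcases hf with hf | hf
    · exact Or.inl (List.mem_toFinset.mp (hdc1 f (List.mem_toFinset.mpr hf) g hg))
    · simp only [List.mem_cons, List.not_mem_nil, or_false] at hf
      rw [hf] at hg
      have he'mem : e' ∈ (L1 ++ [e, e']).toFinset := by simp
      have hg2 := hdc2 e' he'mem g hg
      simp only [List.toFinset_append, Finset.mem_union, List.mem_toFinset] at hg2
      rcases hg2 with h3 | h3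
      · exact Or.inl h3
      · simp only [List.mem_cons, List.not_mem_nil, or_false] at h3
        rcases h3 with rfl | rfl
        · exact absurd hg hkey
        · simp
  · -- i ≥ L1.length + 2
    have h3 : L1.length + 2 ≤ i := h2
    have e1 : (L1 ++ e :: e' :: L2).take i = L1 ++ e :: e' :: L2.take (i - L1.length - 2) := by
      rw [List.take_append, List.take_of_length_le (by omega)]
      congr 1
      have : i - L1.length = (i - L1.length - 2) + 2 := by omega
      rw [this]
      rfl
    have e2 : (L1 ++ e' :: e :: L2).take i = L1 ++ e' :: e :: L2.take (i - L1.length - 2) := by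
      rw [List.take_append, List.take_of_length_le (by omega)]
      congr 1
      have : i - L1.length = (i - L1.length - 2) + 2 := by omega
      rw [this]
      rfl
    have hsame : ((L1 ++ e' :: e :: L2.take (i - L1.length - 2)).toFinset : Finset E)
        = (L1 ++ e :: e' :: L2.take (i - L1.length - 2)).toFinset := by
      ext x
      simp
      tauto
    rw [e2, hsame]
    have := hdc i
    rwa [e1] at this

lemma goodL_mid_erase {ES : EventStructure E} {v : Finset E} {e : E}
    (hmax : ∀ f ∈ v, ES.le e f → f = e) {L1 L2 : List E}
    (hg : GoodL ES v (L1 ++ e :: L2)) : GoodL ES (v.erase e) (L1 ++ L2) := by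
  obtain ⟨hnd, htf, hdc⟩ := hg
  have heL1 : e ∉ L1 := by simp [List.nodup_append] at hnd; exact fun h => (hnd.2.2 e h).1 rfl
  have heL2 : e ∉ L2 := by simp [List.nodup_append] at hnd; tauto
  have hsub : (L1 ++ L2).Sublist (L1 ++ e :: L2) :=
    List.Sublist.append (List.Sublist.refl L1) (List.sublist_cons_self e L2)
  refine ⟨hsub.nodup hnd, ?_, fun i => ?_⟩
  · ext x
    simp only [List.toFinset_append, Finset.mem_union, List.mem_toFinset, Finset.mem_erase,
      ← htf, List.toFinset_append, List.toFinset_cons, Finset.mem_insert]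
    constructor
    · rintro (hx | hx)
      · exact ⟨fun hxe => heL1 (hxe ▸ hx), Or.inl hx⟩
      · exact ⟨fun hxe => heL2 (hxe ▸ hx), Or.inr (Or.inr hx)⟩
    · rintro ⟨hxe, hx | hx | hx⟩
      · exact Or.inl hx
      · exact absurd hx hxe
      · exact Or.inr hx
  · rcases le_or_gt i L1.length with h1 | h1
    · rw [List.take_append_of_le_length h1]
      have := hdc i
      rwa [List.take_append_of_le_length h1] at this
    · have e1 : (L1 ++ L2).take i = L1 ++ L2.take (i - L1.length) := by
        rw [List.take_append, List.take_of_length_le (le_of_lt h1)]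
      have e2 : (L1 ++ e :: L2).take (i + 1) = L1 ++ e :: L2.take (i - L1.length) := by
        rw [List.take_append, List.take_of_length_le (by omega)]
        congr 1
        have : i + 1 - L1.length = (i - L1.length) + 1 := by omega
        rw [this]
        rfl
      have hdcI := hdc (i + 1)
      rw [e2] at hdcI
      have hsubv : ((L1 ++ e :: L2.take (i - L1.length)).toFinset : Finset E) ⊆ v := by
        intro x hx
        rw [← htf]
        simp only [List.toFinset_append, Finset.mem_union, List.mem_toFinset,
          List.toFinset_cons, Finset.mem_insert, List.mem_cons] at hx ⊢
        rcases hx with hx | hx | hx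
        · exact Or.inl hx
        · exact Or.inr (Or.inl hx)
        · exact Or.inr (Or.inr (List.take_subset _ _ hx))
      have hDC := DCl_erase hdcI hsubv hmax
      have hset : ((L1 ++ L2.take (i - L1.length)).toFinset : Finset E)
          = ((L1 ++ e :: L2.take (i - L1.length)).toFinset).erase e := by
        have heT : e ∉ L2.take (i - L1.length) := fun h => heL2 (List.take_subset _ _ h)
        ext x
        simp only [List.toFinset_append, Finset.mem_union, List.mem_toFinset,
          Finset.mem_erase, List.toFinset_cons, Finset.mem_insert]
        constructor
        · rintro (hx | hx)
          · exact ⟨fun hxe => heL1 (hxe ▸ hx), Or.inl hx⟩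
          · exact ⟨fun hxe => heT (hxe ▸ hx), Or.inr (Or.inr hx)⟩
        · rintro ⟨hxe, hx | hx | hx⟩
          · exact Or.inl hx
          · exact absurd hx hxe
          · exact Or.inr hx
      rw [e1, hset]
      exact hDC

lemma equiv_of_goodL {ES : EventStructure E} {I : A → A → Prop} {lab : E → A}
    (hlab : IsTraceLabeling ES I lab) :
    ∀ (n : ℕ) (v : Finset E), v.card = n → ES.IsConfig v →
      ∀ L L', GoodL ES v L → GoodL ES v L' →
        TraceEquiv I (L.map lab) (L'.map lab) := by
  intro n
  induction n with
  | zero =>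
    intro v hc _ L L' hL hL'
    have hv : v = ∅ := Finset.card_eq_zero.mp hc
    subst hv
    rw [(List.toFinset_eq_empty_iff L).mp hL.2.1, (List.toFinset_eq_empty_iff L').mp hL'.2.1]
  | succ n ih =>
    intro v hc hv L L' hL hL'
    have hL'ne : L' ≠ [] := by
      rintro rfl
      rw [← hL'.2.1] at hc
      simp at hc
    set e := L'.getLast hL'ne with he_def
    have hsplit' : L'.dropLast ++ [e] = L' := List.dropLast_append_getLast hL'ne
    have hev : e ∈ v := by
      rw [← hL'.2.1]
      exact List.mem_toFinset.mpr (List.getLast_mem hL'ne)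
    -- maximality of e in v
    have hmax : ∀ f ∈ v, ES.le e f → f = e := by
      have hg2 := hL'.2.1
      have hnd' := hL'.1
      rw [← hsplit'] at hg2 hnd'
      have heDL : e ∉ L'.dropLast := by simp [List.nodup_append] at hnd'; tauto
      have hdcS : DCl ES (L'.dropLast).toFinset := by
        have := hL'.2.2 (L'.length - 1)
        rwa [← List.dropLast_eq_take] at this
      intro f hf hef
      by_contra hne
      have hfD : f ∈ L'.dropLast.toFinset := by
        rw [← hg2] at hf
        simp only [List.toFinset_append, Finset.mem_union, List.mem_toFinset] at hf
        rcases hf with hf | hf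
        · exact List.mem_toFinset.mpr hf
        · simp only [List.toFinset_cons, List.toFinset_nil, insert_empty_eq,
            Finset.mem_singleton, List.mem_cons, List.not_mem_nil, or_false] at hf
          exact absurd hf hne
      exact heDL (List.mem_toFinset.mp (hdcS f hfD e hef))
    have hv' : ES.IsConfig (v.erase e) :=
      ⟨DCl_erase hv.1 (fun _ h => h) hmax,
        fun a ha b hb => hv.2 a (Finset.mem_of_mem_erase ha) b (Finset.mem_of_mem_erase hb)⟩
    have hcard' : (v.erase e).card = n := by
      rw [Finset.card_erase_of_mem hev, hc]
      rfl
    -- split L at e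
    have heL : e ∈ L := List.mem_toFinset.mp (by rw [hL.2.1]; exact hev)
    obtain ⟨L1, L2, rfl⟩ := List.append_of_mem heL
    have hndL := hL.1
    have heL1 : e ∉ L1 := by simp [List.nodup_append] at hndL; exact fun h => (hndL.2.2 e h).1 rfl
    have heL2 : e ∉ L2 := by simp [List.nodup_append] at hndL; tauto
    -- independence of e with everything after it
    have hIf : ∀ f ∈ L2, I (lab e) (lab f) := by
      intro f hf
      have hfv : f ∈ v := by
        rw [← hL.2.1]
        simp [hf]
      have hfe : f ≠ e := by
        rintro rfl
        exact heL2 hf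
      have hfL1 : f ∉ L1 := by
        intro hc1
        exact (List.nodup_append.mp hndL).2.2 f hc1 f (List.mem_cons_of_mem _ hf) rfl
      by_contra hnI
      rcases hlab.les3 e f hnI with h | h | h
      · exact hfe (hmax f hfv h)
      · -- f ≤ e, but f isn't in the prefix L1 ++ [e]
        have htake : (L1 ++ e :: L2).take (L1.length + 1) = L1 ++ [e] := by
          rw [List.take_append, List.take_of_length_le (by omega)]
          congr 1
          simp [Nat.succ_sub (le_refl L1.length)]
        have hdcP : DCl ES (L1 ++ [e]).toFinset := by
          have := hL.2.2 (L1.length + 1)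
          rwa [htake] at this
        have hemem : e ∈ (L1 ++ [e]).toFinset := by simp
        have := hdcP e hemem f h
        simp only [List.toFinset_append, Finset.mem_union, List.mem_toFinset,
          List.toFinset_cons, List.toFinset_nil, insert_empty_eq, Finset.mem_singleton] at this
        rcases this with h3 | h3
        · exact hfL1 h3
        · exact hfe h3
      · exact hv.2 e hev f hfv h
    -- bubble e to the end of L
    have hbub : TraceEquiv I ((L1 ++ e :: L2).map lab) ((L1 ++ L2).map lab ++ [lab e]) := by
      have hb := bubble_right (I := I) (lab e) (L2.map lab) (by
        intro b hb
        obtain ⟨f, hf, rfl⟩ := List.mem_map.mp hb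
        exact hIf f hf)
      have hb2 := traceEquiv_append_left (L1.map lab) hb
      simpa [List.map_append, List.append_assoc] using hb2
    -- recurse
    have hgood1 : GoodL ES (v.erase e) (L1 ++ L2) := goodL_mid_erase hmax hL
    have hgood2 : GoodL ES (v.erase e) L'.dropLast := by
      have h2 : GoodL ES (v.erase e) (L'.dropLast ++ []) :=
        goodL_mid_erase hmax (by rw [hsplit']; exact hL')
      simpa using h2
    have hIH := ih (v.erase e) hcard' hv' (L1 ++ L2) L'.dropLast hgood1 hgood2
    have hfin : TraceEquiv I ((L1 ++ L2).map lab ++ [lab e]) (L'.map lab) := by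
      have := traceEquiv_append_right [lab e] hIH
      rw [← hsplit', List.map_append]
      simpa using this
    exact Relation.ReflTransGen.trans hbub hfin

lemma goodL_of_shortest {ES : EventStructure E} (lab : E → A) {v : ES.Config}
    (p : ES.configGraph.Walk ES.emptyConfig v) (hp : p.length = v.1.card) :
    ∃ L, GoodL ES v.1 L ∧ walkWord lab p = L.map lab := by
  have h0 : (ES.emptyConfig (E := E)).1.card + p.length = v.1.card := by
    simpa [EventStructure.emptyConfig] using hp
  obtain ⟨L, hw, hnd, _, hun, hcfg⟩ := extract_goodL lab p h0
  refine ⟨L, ⟨hnd, ?_, fun i => ?_⟩, hw⟩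
  · have := hun
    simpa [EventStructure.emptyConfig] using this
  · have := (hcfg i).1
    intro f hf g hg
    have hf' : f ∈ (ES.emptyConfig (E := E)).1 ∪ (L.take i).toFinset := by
      simpa [EventStructure.emptyConfig] using hf
    have := this f hf' g hg
    simpa [EventStructure.emptyConfig] using this

end Aux
/-- For any shortest `(v₀,v)`-path `π` of `G(E)`, the geodesic
trace `⟨σ(π)⟩` consists exactly of the words `σ(π')` over all shortest
`(v₀,v)`-paths `π'`. -/
theorem stmt2 {E A : Type*} [Fintype A] [Nonempty A]
    (ES : EventStructure E) (I : A → A → Prop)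
    (hI_irrefl : ∀ a, ¬ I a a) (hI_symm : ∀ a b, I a b → I b a)
    (lab : E → A) (hlab : IsTraceLabeling ES I lab)
    (v : ES.Config)
    (p : ES.configGraph.Walk ES.emptyConfig v)
    (hp : p.length = ES.configGraph.dist ES.emptyConfig v) :
    {w : List A | TraceEquiv I (walkWord lab p) w} =
      {w : List A | ∃ p' : ES.configGraph.Walk ES.emptyConfig v,
        p'.length = ES.configGraph.dist ES.emptyConfig v ∧ w = walkWord lab p'} := by
    classical
  have hdist := dist_eq_card (ES := ES) lab v
  have hplen : p.length = v.1.card := hp.trans hdist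
  obtain ⟨L0, hG0, hW0⟩ := goodL_of_shortest lab p hplen
  ext w
  simp only [Set.mem_setOf_eq]
  constructor
  · intro hw
    have key : ∃ L, GoodL ES v.1 L ∧ L.map lab = w := by
      induction hw with
      | refl => exact ⟨L0, hG0, hW0.symm⟩
      | tail hab hbc ih =>
        obtain ⟨L, hGL, hmap⟩ := ih
        rcases hbc with ⟨u, t, a, b, hab'⟩
        obtain ⟨L1, rest, rfl, hm1, hm2⟩ := List.map_eq_append_iff.mp hmap
        obtain ⟨x, rest2, rfl, rfl, hm3⟩ := List.map_eq_cons_iff.mp hm2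
        obtain ⟨y, L2, rfl, rfl, hm4⟩ := List.map_eq_cons_iff.mp hm3
        refine ⟨L1 ++ y :: x :: L2, swap_goodL hlab hGL hab', ?_⟩
        simp [hm1, hm4]
    obtain ⟨L, hGL, hmap⟩ := key
    obtain ⟨p', hlen', hword'⟩ := walk_of_goodL lab L v hGL
    have hLlen : L.length = v.1.card := by
      rw [← hGL.2.1, List.toFinset_card_of_nodup hGL.1]
    refine ⟨p', by omega, ?_⟩
    rw [hword', hmap]
  · rintro ⟨p', hlen', rfl⟩
    obtain ⟨L', hG', hW'⟩ := goodL_of_shortest lab p' (hlen'.trans hdist)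
    rw [hW0, hW']
    exact equiv_of_goodL hlab v.1.card v.1 rfl v.2 L0 L' hG0 hG'
end

section
/- Let (E, λ) be an M-labeled event structure over a trace alphabet M = (Σ, I). For any two vertices u and v of G(E), the geodesic traces satisfy ⟨σ_u⟩ ⊑ ⟨σ_v⟩ if and only if u ∈ I(v0, v), the metric interval between v0 and v in G(E). -/
section Stmt4Aux
open EventStructure Finset

variable {E A : Type*} [DecidableEq E]

/-- Grow a finset by inserting the elements of a list in order. -/
def grow (c0 : Finset E) (es : List E) : Finset E := es.foldl (fun s e => insert e s) c0

@[simp] lemma grow_nil (c0 : Finset E) : grow c0 [] = c0 := rfl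

@[simp] lemma grow_cons (c0 : Finset E) (e : E) (es : List E) :
    grow c0 (e :: es) = grow (insert e c0) es := rfl

lemma grow_append (c0 : Finset E) (p q : List E) :
    grow c0 (p ++ q) = grow (grow c0 p) q := List.foldl_append ..

lemma mem_grow {c0 : Finset E} {es : List E} {x : E} :
    x ∈ grow c0 es ↔ x ∈ c0 ∨ x ∈ es := by
  induction es generalizing c0 with
  | nil => simp
  | cons e t ih => rw [grow_cons, ih]; simp [Finset.mem_insert]; tauto

lemma grow_empty_eq (es : List E) : grow (∅ : Finset E) es = es.toFinset := by
  ext x; simp [mem_grow]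

/-- A step sequence from a configuration: a list of events each of which can be
added in turn, staying within configurations. -/
inductive StepSeq (ES : EventStructure E) : Finset E → List E → Prop
  | nil {c0} (hc : ES.IsConfig c0) : StepSeq ES c0 []
  | cons {c0 e es} (hm : e ∉ c0) (hc : ES.IsConfig c0)
      (hc' : ES.IsConfig (insert e c0)) (ht : StepSeq ES (insert e c0) es) :
      StepSeq ES c0 (e :: es)

variable {ES : EventStructure E}

lemma StepSeq.base_config {c0 : Finset E} {es : List E} (h : StepSeq ES c0 es) :
    ES.IsConfig c0 := by
  cases h with
  | nil hc => exact hc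
  | cons _ hc _ _ => exact hc

lemma StepSeq.grow_config {c0 : Finset E} {es : List E} (h : StepSeq ES c0 es) :
    ES.IsConfig (grow c0 es) := by
  induction h with
  | nil hc => exact hc
  | cons _ _ _ _ ih => exact ih

lemma StepSeq.not_mem_base {c0 : Finset E} {es : List E} (h : StepSeq ES c0 es) :
    ∀ e ∈ es, e ∉ c0 := by
  induction h with
  | nil => simp
  | cons hm _ _ _ ih =>
    intro x hx hxc0
    rcases List.mem_cons.1 hx with rfl | hx
    · exact hm hxc0
    · exact ih x hx (Finset.mem_insert_of_mem hxc0)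

lemma StepSeq.nodup {c0 : Finset E} {es : List E} (h : StepSeq ES c0 es) : es.Nodup := by
  induction h with
  | nil => simp
  | cons _ _ _ ht ih =>
    refine List.nodup_cons.2 ⟨fun hmem => ?_, ih⟩
    exact ht.not_mem_base _ hmem (Finset.mem_insert_self ..)

lemma StepSeq.append_iff {c0 : Finset E} {p q : List E} :
    StepSeq ES c0 (p ++ q) ↔ StepSeq ES c0 p ∧ StepSeq ES (grow c0 p) q := by
  induction p generalizing c0 with
  | nil =>
    simp only [List.nil_append, grow_nil]
    exact ⟨fun h => ⟨.nil h.base_config, h⟩, fun h => h.2⟩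
  | cons e t ih =>
    constructor
    · intro h
      cases h with
      | cons hm hc hc' ht =>
        obtain ⟨h1, h2⟩ := ih.1 ht
        exact ⟨.cons hm hc hc' h1, h2⟩
    · rintro ⟨h1, h2⟩
      cases h1 with
      | cons hm hc hc' ht => exact .cons hm hc hc' (ih.2 ⟨ht, h2⟩)

lemma StepSeq.length_eq {c0 : Finset E} {es : List E} (h : StepSeq ES c0 es) :
    es.length = ((grow c0 es) \ c0).card := by
  have hset : grow c0 es \ c0 = es.toFinset := by
    ext x
    simp only [Finset.mem_sdiff, mem_grow, List.mem_toFinset]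
    constructor
    · rintro ⟨h1 | h1, h2⟩
      · exact absurd h1 h2
      · exact h1
    · intro hx
      exact ⟨Or.inr hx, h.not_mem_base x hx⟩
  rw [hset, List.toFinset_card_of_nodup h.nodup]

lemma StepSeq.head_cause {c0 : Finset E} {e x : E} {es : List E}
    (h : StepSeq ES c0 (e :: es)) (hx : ES.le x e) : x = e ∨ x ∈ c0 := by
  cases h with
  | cons hm hc hc' ht =>
    have := hc'.1 e (Finset.mem_insert_self ..) x hx
    simpa [Finset.mem_insert] using this

end Stmt4Aux

section Stmt4Aux2
open EventStructure Finset
set_option linter.unusedSectionVars false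

variable {E A : Type*} [DecidableEq E] {ES : EventStructure E} {I : A → A → Prop}
  {lab : E → A}

/-- The finite set of causes of an event. -/
noncomputable def causesF (ES : EventStructure E) (e : E) : Finset E :=
  (ES.finite_cause e).toFinset

lemma mem_causesF {e x : E} : x ∈ causesF ES e ↔ ES.le x e := by
  simp [causesF, Set.Finite.mem_toFinset]

lemma causesF_card_lt {x y : E} (h : ES.le x y) (hne : x ≠ y) :
    (causesF ES x).card < (causesF ES y).card := by
  apply Finset.card_lt_card
  constructor
  · intro z hz
    exact mem_causesF.2 (ES.le_trans _ _ _ (mem_causesF.1 hz) h)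
  · intro hsub
    have : y ∈ causesF ES x := hsub (mem_causesF.2 (ES.le_refl y))
    exact hne (ES.le_antisymm _ _ h (mem_causesF.1 this))

lemma exists_minConflict {e e' : E} (h : ES.conflict e e') :
    ∃ f f', ES.le f e ∧ ES.le f' e' ∧ ES.MinConflict f f' := by
  suffices H : ∀ n (e e' : E), (causesF ES e).card + (causesF ES e').card ≤ n →
      ES.conflict e e' → ∃ f f', ES.le f e ∧ ES.le f' e' ∧ ES.MinConflict f f' from
    H _ e e' le_rfl h
  intro n
  induction n with
  | zero =>
    intro e e' hle _
    have : e ∈ causesF ES e := mem_causesF.2 (ES.le_refl e)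
    have : 0 < (causesF ES e).card := Finset.card_pos.2 ⟨e, this⟩
    omega
  | succ n ih =>
    intro e e' hn h
    by_cases hmc : ES.MinConflict e e'
    · exact ⟨e, e', ES.le_refl e, ES.le_refl e', hmc⟩
    · have hB : ∃ e'', e'' ≠ e ∧ e'' ≠ e' ∧
          ((ES.le e'' e ∧ ES.conflict e'' e') ∨ (ES.le e'' e' ∧ ES.conflict e'' e)) := by
        by_contra hB
        exact hmc ⟨h, hB⟩
      obtain ⟨x, hxe, hxe', hcase⟩ := hB
      rcases hcase with ⟨hle, hconf⟩ | ⟨hle, hconf⟩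
      · have hlt : (causesF ES x).card < (causesF ES e).card := causesF_card_lt hle hxe
        obtain ⟨f, f', h1, h2, h3⟩ := ih x e' (by omega) hconf
        exact ⟨f, f', ES.le_trans _ _ _ h1 hle, h2, h3⟩
      · have hlt : (causesF ES x).card < (causesF ES e').card := causesF_card_lt hle hxe'
        obtain ⟨f, f', h1, h2, h3⟩ := ih e x (by omega) (ES.conflict_symm _ _ hconf)
        exact ⟨f, f', h1, ES.le_trans _ _ _ h2 hle, h3⟩

lemma StepSeq.swap_core (hlab : IsTraceLabeling ES I lab) {c1 : Finset E} {x y : E}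
    {s : List E} (h : StepSeq ES c1 (x :: y :: s)) (hxy : I (lab x) (lab y)) :
    StepSeq ES c1 (y :: x :: s) := by
  cases h with
  | cons hmx hc1 hcx ht =>
  cases ht with
  | cons hmy _ hcxy ht2 =>
  have hne : x ≠ y := fun hh => hmy (hh ▸ Finset.mem_insert_self x c1)
  have hnxy : ¬ ES.le x y := by
    intro hle
    by_cases himm : ES.ImmPred x y
    · exact hlab.les2 x y (Or.inl himm) hxy
    · obtain ⟨f, hxf, hfy, hfx, hfy'⟩ :
          ∃ f, ES.le x f ∧ ES.le f y ∧ f ≠ x ∧ f ≠ y := by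
        by_contra hno
        push_neg at hno
        refine himm ⟨hle, hne, fun f h1 h2 => ?_⟩
        by_cases hfx : f = x
        · exact Or.inl hfx
        · exact Or.inr (hno f h1 h2 hfx)
      have hfmem : f ∈ insert y (insert x c1) :=
        hcxy.1 y (Finset.mem_insert_self ..) f hfy
      have hfc1 : f ∈ c1 := by
        rcases Finset.mem_insert.1 hfmem with rfl | h2
        · exact absurd rfl hfy'
        · rcases Finset.mem_insert.1 h2 with rfl | h3
          · exact absurd rfl hfx
          · exact h3
      exact hmx (hc1.1 f hfc1 x hxf)
  have hcy : ES.IsConfig (insert y c1) := by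
    constructor
    · intro a ha z hz
      rcases Finset.mem_insert.1 ha with rfl | hac1
      · have hzmem := hcxy.1 a (Finset.mem_insert_self ..) z hz
        rcases Finset.mem_insert.1 hzmem with rfl | h2
        · exact Finset.mem_insert_self ..
        · rcases Finset.mem_insert.1 h2 with rfl | h3
          · exact absurd hz hnxy
          · exact Finset.mem_insert_of_mem h3
      · exact Finset.mem_insert_of_mem (hc1.1 a hac1 z hz)
    · intro a ha b hb
      have hsub : insert y c1 ⊆ insert y (insert x c1) := by
        intro z hz
        rcases Finset.mem_insert.1 hz with rfl | hz
        · exact Finset.mem_insert_self ..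
        · exact Finset.mem_insert_of_mem (Finset.mem_insert_of_mem hz)
      exact hcxy.2 a (hsub ha) b (hsub hb)
  have hmy' : y ∉ c1 := fun hh => hmy (Finset.mem_insert_of_mem hh)
  have hmx' : x ∉ insert y c1 := by
    simp only [Finset.mem_insert]
    rintro (rfl | hh)
    · exact hne rfl
    · exact hmx hh
  have hswap : insert x (insert y c1) = insert y (insert x c1) :=
    Finset.insert_comm ..
  exact .cons hmy' hc1 hcy (.cons hmx' hcy (hswap ▸ hcxy) (hswap ▸ ht2))

lemma swapStep_inv {w w' : List A} (h : SwapStep I w w') :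
    ∃ u v a b, I a b ∧ w = u ++ a :: b :: v ∧ w' = u ++ b :: a :: v := by
  cases h with
  | swap u v a b hI => exact ⟨u, v, a, b, hI, rfl, rfl⟩

lemma StepSeq.of_swapstep (hlab : IsTraceLabeling ES I lab) {c0 : Finset E}
    {es : List E} {w : List A} (h : StepSeq ES c0 es) (hs : SwapStep I (es.map lab) w) :
    ∃ es', StepSeq ES c0 es' ∧ es'.map lab = w ∧ es'.toFinset = es.toFinset := by
  obtain ⟨u0, v0, a, b, hab, heq1, heq2⟩ := swapStep_inv hs
  obtain ⟨p1, rest, rfl, hp1, hrest⟩ := List.map_eq_append_iff.1 heq1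
  obtain ⟨x, rest1, rfl, hx, hrest1⟩ := List.map_eq_cons_iff.1 hrest
  obtain ⟨y, s1, rfl, hy, hs1⟩ := List.map_eq_cons_iff.1 hrest1
  obtain ⟨h1, h2⟩ := StepSeq.append_iff.1 h
  have h2' : StepSeq ES (grow c0 p1) (y :: x :: s1) :=
    h2.swap_core hlab (by rw [hx, hy]; exact hab)
  refine ⟨p1 ++ y :: x :: s1, StepSeq.append_iff.2 ⟨h1, h2'⟩, ?_, ?_⟩
  · simp [hp1, hx, hy, hs1, heq2]
  · ext z
    simp only [List.mem_toFinset, List.mem_append, List.mem_cons]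
    tauto

lemma StepSeq.of_traceEquiv (hlab : IsTraceLabeling ES I lab) {c0 : Finset E}
    {es : List E} {w : List A} (h : StepSeq ES c0 es)
    (ht : TraceEquiv I (es.map lab) w) :
    ∃ es', StepSeq ES c0 es' ∧ es'.map lab = w ∧ es'.toFinset = es.toFinset := by
  induction ht with
  | refl => exact ⟨es, h, rfl, rfl⟩
  | tail _ hstep ih =>
    obtain ⟨es1, h1, hmap, hfin⟩ := ih
    obtain ⟨es2, h2, hmap2, hfin2⟩ := h1.of_swapstep hlab (hmap ▸ hstep)
    exact ⟨es2, h2, hmap2, hfin2.trans hfin⟩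

lemma traceEquiv_cons {l l' : List A} (a : A) (h : TraceEquiv I l l') :
    TraceEquiv I (a :: l) (a :: l') := by
  refine Relation.ReflTransGen.lift (a :: ·) (fun x y hxy => ?_) _ _ h
  cases hxy with
  | swap u v c d hI => exact SwapStep.swap (a :: u) v c d hI

lemma swapStep_symm (hI_symm : ∀ a b, I a b → I b a) {w w' : List A}
    (h : SwapStep I w w') : SwapStep I w' w := by
  cases h with
  | swap u v a b hI => exact .swap u v b a (hI_symm _ _ hI)

lemma traceEquiv_symm (hI_symm : ∀ a b, I a b → I b a) {w w' : List A}
    (h : TraceEquiv I w w') : TraceEquiv I w' w := by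
  induction h with
  | refl => exact .refl
  | tail _ hstep ih =>
    exact Relation.ReflTransGen.trans
      (Relation.ReflTransGen.single (swapStep_symm hI_symm hstep)) ih

lemma StepSeq.unique (hI_irrefl : ∀ a, ¬ I a a) (hlab : IsTraceLabeling ES I lab) :
    ∀ {es es' : List E} {c0 : Finset E}, StepSeq ES c0 es → StepSeq ES c0 es' →
      es.map lab = es'.map lab → es = es' := by
  intro es
  induction es with
  | nil =>
    intro es' c0 _ _ hmap
    simpa using (List.map_eq_nil_iff.1 hmap.symm).symm
  | cons e t ih =>
    intro es' c0 h h' hmap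
    cases es' with
    | nil => simp at hmap
    | cons e' t' =>
      simp only [List.map_cons, List.cons.injEq] at hmap
      obtain ⟨hlabeq, hmapt⟩ := hmap
      cases h with
      | cons hm hc hc' ht =>
      cases h' with
      | cons hm' _ hc2' ht' =>
      have hee : e = e' := by
        by_contra hne
        have hnI : ¬ I (lab e) (lab e') := by rw [hlabeq]; exact hI_irrefl _
        rcases hlab.les3 e e' hnI with hle | hle | hconf
        · have := hc2'.1 e' (Finset.mem_insert_self ..) e hle
          rcases Finset.mem_insert.1 this with rfl | hc0
          · exact hne rfl
          · exact hm hc0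
        · have := hc'.1 e (Finset.mem_insert_self ..) e' hle
          rcases Finset.mem_insert.1 this with rfl | hc0
          · exact hne rfl
          · exact hm' hc0
        · obtain ⟨f, f', hf, hf', hmc⟩ := exists_minConflict hconf
          have hfc : f ∈ insert e c0 := hc'.1 e (Finset.mem_insert_self ..) f hf
          have hf'c : f' ∈ insert e' c0 := hc2'.1 e' (Finset.mem_insert_self ..) f' hf'
          have hconf_ff' : ES.conflict f f' := hmc.1
          rcases Finset.mem_insert.1 hfc with rfl | hf0
          · rcases Finset.mem_insert.1 hf'c with rfl | hf'0
            · exact hlab.les1 _ _ hmc hlabeq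
            · exact hc'.2 f (Finset.mem_insert_self ..) f'
                (Finset.mem_insert_of_mem hf'0) hconf_ff'
          · rcases Finset.mem_insert.1 hf'c with rfl | hf'0
            · exact hc2'.2 f (Finset.mem_insert_of_mem hf0) f'
                (Finset.mem_insert_self ..) hconf_ff'
            · exact hc.2 f hf0 f' hf'0 hconf_ff'
      subst hee
      rw [ih ht ht' hmapt]

end Stmt4Aux2

section Stmt4Aux3
open EventStructure Finset
set_option linter.unusedSectionVars false

variable {E A : Type*} [DecidableEq E] {ES : EventStructure E} {I : A → A → Prop}
  {lab : E → A}

lemma StepSeq.pull (hlab : IsTraceLabeling ES I lab) {e : E} :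
    ∀ {p s : List E} {c0 : Finset E}, StepSeq ES c0 (p ++ e :: s) → e ∉ c0 →
      ES.IsConfig (insert e c0) →
      StepSeq ES c0 (e :: (p ++ s)) ∧
        TraceEquiv I ((p ++ e :: s).map lab) ((e :: (p ++ s)).map lab) := by
  intro p
  induction p with
  | nil => exact fun h _ _ => ⟨h, .refl⟩
  | cons f p' ih =>
    intro s c0 h he hce
    cases h with
    | cons hmf hc0 hcf ht =>
    have hmem' : e ∉ insert f c0 := ht.not_mem_base e (by simp)
    have hef : e ≠ f := fun hh => hmem' (hh ▸ Finset.mem_insert_self f c0)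
    have hgrow := (StepSeq.cons hmf hc0 hcf ht).grow_config
    have hin_grow : ∀ x : E, x ∈ insert e (insert f c0) → x ∈ grow c0 (f :: (p' ++ e :: s)) := by
      intro x hx
      rw [mem_grow]
      rcases Finset.mem_insert.1 hx with rfl | hx
      · exact Or.inr (by simp)
      · rcases Finset.mem_insert.1 hx with rfl | hx
        · exact Or.inr (by simp)
        · exact Or.inl hx
    have hcef : ES.IsConfig (insert e (insert f c0)) := by
      constructor
      · intro a ha z hz
        rcases Finset.mem_insert.1 ha with rfl | ha'
        · have := hce.1 a (Finset.mem_insert_self ..) z hz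
          rcases Finset.mem_insert.1 this with rfl | hz'
          · exact Finset.mem_insert_self ..
          · exact Finset.mem_insert_of_mem (Finset.mem_insert_of_mem hz')
        · exact Finset.mem_insert_of_mem (hcf.1 a ha' z hz)
      · intro a ha b hb
        exact hgrow.2 a (hin_grow a ha) b (hin_grow b hb)
    obtain ⟨h1, h2⟩ := ih ht hmem' hcef
    have hfe : StepSeq ES c0 (f :: e :: (p' ++ s)) := .cons hmf hc0 hcf h1
    have hIfe : I (lab f) (lab e) := by
      by_contra hnI
      rcases hlab.les3 f e hnI with hle | hle | hconf
      · have := hce.1 e (Finset.mem_insert_self ..) f hle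
        rcases Finset.mem_insert.1 this with rfl | hc0'
        · exact hef rfl
        · exact hmf hc0'
      · have := hcf.1 f (Finset.mem_insert_self ..) e hle
        exact hmem' this
      · refine hgrow.2 f ?_ e ?_ hconf
        · exact hin_grow f (Finset.mem_insert_of_mem (Finset.mem_insert_self ..))
        · exact hin_grow e (Finset.mem_insert_self ..)
    refine ⟨hfe.swap_core hlab hIfe, ?_⟩
    have step1 : TraceEquiv I ((f :: (p' ++ e :: s)).map lab)
        ((f :: e :: (p' ++ s)).map lab) := by
      simp only [List.map_cons]
      exact traceEquiv_cons _ h2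
    have step2 : SwapStep I ((f :: e :: (p' ++ s)).map lab)
        ((e :: f :: (p' ++ s)).map lab) :=
      SwapStep.swap [] _ (lab f) (lab e) hIfe
    exact step1.trans (Relation.ReflTransGen.single step2)

lemma StepSeq.equiv (hlab : IsTraceLabeling ES I lab)
    (hI_symm : ∀ a b, I a b → I b a) :
    ∀ {es es' : List E} {c0 : Finset E}, StepSeq ES c0 es → StepSeq ES c0 es' →
      es.toFinset = es'.toFinset → TraceEquiv I (es.map lab) (es'.map lab) := by
  intro es
  induction es with
  | nil =>
    intro es' c0 _ _ hfin
    have : es' = [] := (List.toFinset_eq_empty_iff es').1 (by simpa using hfin.symm)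
    subst this
    exact .refl
  | cons e t ih =>
    intro es' c0 h h' hfin
    have hmem : e ∈ es' := by
      have : e ∈ es'.toFinset := hfin ▸ (by simp)
      simpa using this
    obtain ⟨p1, s1, rfl⟩ := List.append_of_mem hmem
    have hnd := h.nodup
    have hnd' := h'.nodup
    have he_t : e ∉ t := (List.nodup_cons.1 hnd).1
    obtain ⟨hnp1, hnes1, hdisj⟩ := List.nodup_append.1 hnd'
    have he_p1 : e ∉ p1 := fun hh => hdisj e hh e (by simp) rfl
    have he_s1 : e ∉ s1 := (List.nodup_cons.1 hnes1).1
    cases h with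
    | cons hm hc hc' ht =>
    obtain ⟨h1, hequiv⟩ := h'.pull hlab hm hc'
    have ht1 : StepSeq ES (insert e c0) (p1 ++ s1) := by
      cases h1 with
      | cons _ _ _ htail => exact htail
    have hfin' : t.toFinset = (p1 ++ s1).toFinset := by
      ext z
      have hz := Finset.ext_iff.1 hfin z
      simp only [List.mem_toFinset, List.mem_cons, List.mem_append] at hz ⊢
      constructor
      · intro hzt
        have hzne : z ≠ e := fun hh => he_t (hh ▸ hzt)
        rcases hz.1 (Or.inr hzt) with h1 | h2 | h3
        · exact Or.inl h1
        · exact absurd h2 hzne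
        · exact Or.inr h3
      · rintro (hzp | hzs)
        · rcases hz.2 (Or.inl hzp) with rfl | hzt
          · exact absurd hzp he_p1
          · exact hzt
        · rcases hz.2 (Or.inr (Or.inr hzs)) with rfl | hzt
          · exact absurd hzs he_s1
          · exact hzt
    have hrec := ih ht ht1 hfin'
    have : TraceEquiv I ((e :: t).map lab) ((e :: (p1 ++ s1)).map lab) := by
      simp only [List.map_cons]
      exact traceEquiv_cons _ hrec
    exact this.trans (traceEquiv_symm hI_symm hequiv)

end Stmt4Aux3

section Stmt4Aux4
open EventStructure Finset
set_option linter.unusedSectionVars false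

variable {E A : Type*} [DecidableEq E] [Nonempty A] {ES : EventStructure E}
  {I : A → A → Prop} {lab : E → A}

lemma stepLabel_insert (lab : E → A) {e : E} {c0 : Finset E} (he : e ∉ c0) :
    stepLabel lab c0 (insert e c0) = lab e := by
  have hex : ∃ x, (x ∈ insert e c0 ∧ x ∉ c0) ∨ (x ∈ c0 ∧ x ∉ insert e c0) :=
    ⟨e, Or.inl ⟨Finset.mem_insert_self .., he⟩⟩
  rw [stepLabel, dif_pos hex]
  have hspec := hex.choose_spec
  rcases hspec with ⟨h1, h2⟩ | ⟨h1, h2⟩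
  · rcases Finset.mem_insert.1 h1 with hh | hh
    · rw [hh]
    · exact absurd hh h2
  · exact absurd (Finset.mem_insert_of_mem h1) h2

lemma walkWord_cons {c b c' : ES.Config} (h : ES.configGraph.Adj c b)
    (w : ES.configGraph.Walk b c') :
    walkWord lab (SimpleGraph.Walk.cons h w) = stepLabel lab c.1 b.1 :: walkWord lab w := by
  simp [walkWord, SimpleGraph.Walk.darts_cons]

lemma stepseq_to_walk (lab : E → A) {c0 : Finset E} (hc0 : ES.IsConfig c0)
    {es : List E} (h : StepSeq ES c0 es) :
    ∃ w : ES.configGraph.Walk ⟨c0, hc0⟩ ⟨grow c0 es, h.grow_config⟩,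
      w.length = es.length ∧ walkWord lab w = es.map lab := by
  induction es generalizing c0 with
  | nil => exact ⟨.nil, rfl, rfl⟩
  | cons e t ih =>
    cases h with
    | cons hm hc hc' ht =>
    obtain ⟨w, hlen, hword⟩ := ih hc' ht
    have hadj : ES.configGraph.Adj ⟨c0, hc0⟩ ⟨insert e c0, hc'⟩ :=
      Or.inl ⟨e, hm, fun x => by simp [Finset.mem_insert]⟩
    refine ⟨.cons hadj w, by simp [hlen], ?_⟩
    exact (walkWord_cons hadj w).trans (by rw [hword, stepLabel_insert lab hm, List.map_cons])

lemma adj_cases {c c' : ES.Config} (h : ES.configGraph.Adj c c') :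
    (∃ e, e ∉ c.1 ∧ c'.1 = insert e c.1) ∨ (∃ e, e ∉ c'.1 ∧ c.1 = insert e c'.1) := by
  rcases h with ⟨e, he, hmem⟩ | ⟨e, he, hmem⟩
  · exact Or.inl ⟨e, he, Finset.ext fun x => by simp [hmem x, Finset.mem_insert]⟩
  · exact Or.inr ⟨e, he, Finset.ext fun x => by simp [hmem x, Finset.mem_insert]⟩

lemma symmDiff_insert_self {s : Finset E} {e : E} (he : e ∉ s) :
    symmDiff s (insert e s) = {e} := by
  ext x
  simp only [Finset.mem_symmDiff, Finset.mem_insert, Finset.mem_singleton]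
  constructor
  · rintro (⟨h1, h2⟩ | ⟨(rfl | h1), h2⟩)
    · exact absurd (Or.inr h1) h2
    · rfl
    · exact absurd h1 h2
  · rintro rfl
    exact Or.inr ⟨Or.inl rfl, he⟩

lemma adj_symmDiff {c c' : ES.Config} (h : ES.configGraph.Adj c c') :
    (symmDiff c.1 c'.1).card = 1 := by
  rcases adj_cases h with ⟨e, he, heq⟩ | ⟨e, he, heq⟩
  · rw [heq, symmDiff_insert_self he, Finset.card_singleton]
  · rw [heq, symmDiff_comm, symmDiff_insert_self he, Finset.card_singleton]

lemma walk_length_lb {c c' : ES.Config} (w : ES.configGraph.Walk c c') :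
    (symmDiff c.1 c'.1).card ≤ w.length := by
  induction w with
  | nil => simp [symmDiff_self, Finset.bot_eq_empty]
  | @cons c b c' hadj wt ih =>
    have htri : symmDiff c.1 c'.1 ⊆ symmDiff c.1 b.1 ∪ symmDiff b.1 c'.1 :=
      symmDiff_triangle c.1 b.1 c'.1
    have h1 : (symmDiff c.1 c'.1).card ≤
        (symmDiff c.1 b.1).card + (symmDiff b.1 c'.1).card :=
      le_trans (Finset.card_le_card htri) (Finset.card_union_le ..)
    have h2 := adj_symmDiff hadj
    simp only [SimpleGraph.Walk.length_cons]
    omega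

lemma IsConfig.inter {c c' : Finset E} (hc : ES.IsConfig c) (hc' : ES.IsConfig c') :
    ES.IsConfig (c ∩ c') := by
  constructor
  · intro a ha z hz
    have := Finset.mem_inter.1 ha
    exact Finset.mem_inter.2 ⟨hc.1 a this.1 z hz, hc'.1 a this.2 z hz⟩
  · intro a ha b hb
    exact hc.2 a (Finset.mem_inter.1 ha).1 b (Finset.mem_inter.1 hb).1

lemma exists_stepseq_of_subset :
    ∀ (n : ℕ) {c c' : Finset E}, ES.IsConfig c → ES.IsConfig c' → c ⊆ c' →
      (c' \ c).card = n → ∃ es : List E, StepSeq ES c es ∧ grow c es = c' := by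
  intro n
  induction n with
  | zero =>
    intro c c' hc hc' hsub hcard
    have : c' \ c = ∅ := Finset.card_eq_zero.1 hcard
    have heq : c = c' :=
      Finset.Subset.antisymm hsub (Finset.sdiff_eq_empty_iff_subset.1 this)
    exact ⟨[], .nil hc, by rw [grow_nil, heq]⟩
  | succ n ih =>
    intro c c' hc hc' hsub hcard
    have hne : (c' \ c).Nonempty := Finset.card_pos.1 (by omega)
    obtain ⟨e, he, hmin⟩ := Finset.exists_min_image (c' \ c)
      (fun x => (causesF ES x).card) hne
    obtain ⟨hec', hec⟩ := Finset.mem_sdiff.1 he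
    have hcfg : ES.IsConfig (insert e c) := by
      constructor
      · intro a ha z hz
        rcases Finset.mem_insert.1 ha with rfl | hac
        · by_cases hzc : z ∈ c
          · exact Finset.mem_insert_of_mem hzc
          · by_cases hze : z = a
            · subst hze; exact Finset.mem_insert_self ..
            · have hzc' : z ∈ c' := hc'.1 a hec' z hz
              have hzd : z ∈ c' \ c := Finset.mem_sdiff.2 ⟨hzc', hzc⟩
              have hlt : (causesF ES z).card < (causesF ES a).card :=
                causesF_card_lt hz hze
              have := hmin z hzd
              omega
        · exact Finset.mem_insert_of_mem (hc.1 a hac z hz)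
      · intro a ha b hb
        have hsub' : insert e c ⊆ c' := Finset.insert_subset hec' hsub
        exact hc'.2 a (hsub' ha) b (hsub' hb)
    have hcard' : (c' \ insert e c).card = n := by
      have heq : c' \ insert e c = (c' \ c).erase e := by
        ext z
        simp only [Finset.mem_sdiff, Finset.mem_insert, Finset.mem_erase]
        tauto
      rw [heq, Finset.card_erase_of_mem he, hcard]
      omega
    obtain ⟨es, hst, hgrow⟩ := ih hcfg hc' (Finset.insert_subset hec' hsub) hcard'
    exact ⟨e :: es, .cons hec hc hcfg hst, hgrow⟩

lemma symmDiff_card_eq (s t : Finset E) :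
    (symmDiff s t).card = (s \ t).card + (t \ s).card := by
  rw [symmDiff_def, sup_eq_union, Finset.card_union_of_disjoint disjoint_sdiff_sdiff]

lemma config_dist (lab : E → A) (c c' : ES.Config) :
    ES.configGraph.dist c c' = (symmDiff c.1 c'.1).card := by
  have hm : ES.IsConfig (c.1 ∩ c'.1) := IsConfig.inter c.2 c'.2
  set m : ES.Config := ⟨c.1 ∩ c'.1, hm⟩ with hmdef
  obtain ⟨es1, h1, hg1⟩ := exists_stepseq_of_subset (ES := ES) _ hm c.2
    Finset.inter_subset_left rfl
  obtain ⟨es2, h2, hg2⟩ := exists_stepseq_of_subset (ES := ES) _ hm c'.2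
    Finset.inter_subset_right rfl
  obtain ⟨w1, hlen1, _⟩ := stepseq_to_walk lab hm h1
  obtain ⟨w2, hlen2, _⟩ := stepseq_to_walk lab hm h2
  have he1 : (⟨grow m.1 es1, h1.grow_config⟩ : ES.Config) = c := Subtype.ext hg1
  have he2 : (⟨grow m.1 es2, h2.grow_config⟩ : ES.Config) = c' := Subtype.ext hg2
  let w : ES.configGraph.Walk c c' :=
    (w1.copy rfl he1).reverse.append (w2.copy rfl he2)
  have hwlen : w.length = (symmDiff c.1 c'.1).card := by
    have l1 : es1.length = (c.1 \ c'.1).card := by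
      rw [h1.length_eq, hg1]
      congr 1
      exact Finset.sdiff_inter_self_left ..
    have l2 : es2.length = (c'.1 \ c.1).card := by
      rw [h2.length_eq, hg2]
      congr 1
      rw [Finset.inter_comm]
      exact Finset.sdiff_inter_self_left ..
    simp only [w, SimpleGraph.Walk.length_append, SimpleGraph.Walk.length_reverse,
      SimpleGraph.Walk.length_copy]
    rw [symmDiff_card_eq, hlen1, hlen2, l1, l2]
  apply _root_.le_antisymm
  · rw [← hwlen]; exact SimpleGraph.dist_le w
  · obtain ⟨p, hp⟩ := SimpleGraph.Reachable.exists_walk_length_eq_dist w.reachable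
    rw [← hp]; exact walk_length_lb p

lemma walk_to_stepseq (lab : E → A) {cu : ES.Config} :
    ∀ {c : ES.Config} (w : ES.configGraph.Walk c cu), c.1 ⊆ cu.1 →
      w.length = (cu.1 \ c.1).card →
      ∃ es, StepSeq ES c.1 es ∧ grow c.1 es = cu.1 ∧ es.map lab = walkWord lab w := by
  intro c w
  induction w with
  | nil => exact fun _ _ => ⟨[], .nil (Subtype.prop _), rfl, rfl⟩
  | @cons c b cu hadj wt ih =>
    intro hsub hlen
    simp only [SimpleGraph.Walk.length_cons] at hlen
    have hlb := walk_length_lb wt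
    rcases adj_cases hadj with ⟨e, he, hb⟩ | ⟨e, he, hc⟩
    · -- upward step: b = insert e c
      have heu : e ∈ cu.1 := by
        by_contra hnu
        have hsub2 : insert e (cu.1 \ c.1) ⊆ symmDiff b.1 cu.1 := by
          intro x hx
          rw [Finset.mem_symmDiff]
          rcases Finset.mem_insert.1 hx with rfl | hx
          · exact Or.inl ⟨hb ▸ Finset.mem_insert_self .., hnu⟩
          · obtain ⟨hx1, hx2⟩ := Finset.mem_sdiff.1 hx
            refine Or.inr ⟨hx1, ?_⟩
            rw [hb, Finset.mem_insert]
            rintro (rfl | hh)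
            · exact hnu hx1
            · exact hx2 hh
        have hcard : (cu.1 \ c.1).card + 1 ≤ (symmDiff b.1 cu.1).card := by
          have := Finset.card_le_card hsub2
          rwa [Finset.card_insert_of_notMem
            (fun hh => hnu (Finset.mem_sdiff.1 hh).1)] at this
        omega
      have hbu : b.1 ⊆ cu.1 := by rw [hb]; exact Finset.insert_subset heu hsub
      have hcard : wt.length = (cu.1 \ b.1).card := by
        have heq : cu.1 \ b.1 = (cu.1 \ c.1).erase e := by
          rw [hb]; ext z
          simp only [Finset.mem_sdiff, Finset.mem_insert, Finset.mem_erase]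
          tauto
        rw [heq, Finset.card_erase_of_mem (Finset.mem_sdiff.2 ⟨heu, he⟩)]
        omega
      obtain ⟨es, h1, h2, h3⟩ := ih hbu hcard
      refine ⟨e :: es, .cons he c.2 (hb ▸ b.2) (hb ▸ h1), ?_, ?_⟩
      · rw [grow_cons, ← hb]; exact h2
      · rw [walkWord_cons, List.map_cons, h3, hb, stepLabel_insert lab he]
    · -- downward step: impossible on a geodesic from below
      exfalso
      have heu : e ∈ cu.1 := hsub (hc ▸ Finset.mem_insert_self ..)
      have hsub2 : insert e (cu.1 \ c.1) ⊆ symmDiff b.1 cu.1 := by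
        intro x hx
        rw [Finset.mem_symmDiff]
        rcases Finset.mem_insert.1 hx with rfl | hx
        · exact Or.inr ⟨heu, he⟩
        · obtain ⟨hx1, hx2⟩ := Finset.mem_sdiff.1 hx
          refine Or.inr ⟨hx1, fun hh => hx2 ?_⟩
          rw [hc]
          exact Finset.mem_insert_of_mem hh
      have hmemE : e ∉ cu.1 \ c.1 := by
        rw [Finset.mem_sdiff, hc]
        intro hh
        exact hh.2 (Finset.mem_insert_self ..)
      have hcard : (cu.1 \ c.1).card + 1 ≤ (symmDiff b.1 cu.1).card := by
        have := Finset.card_le_card hsub2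
        rwa [Finset.card_insert_of_notMem hmemE] at this
      omega

end Stmt4Aux4

/-- `⟨σ_u⟩ ⊑ ⟨σ_v⟩` if and only if `u` lies in the metric
interval `I(v₀, v)` of `G(E)`. -/
theorem stmt4 {E A : Type*} [Fintype A] [Nonempty A]
    (ES : EventStructure E) (I : A → A → Prop)
    (hI_irrefl : ∀ a, ¬ I a a) (hI_symm : ∀ a b, I a b → I b a)
    (lab : E → A) (hlab : IsTraceLabeling ES I lab)
    (u v : ES.Config)
    (p : ES.configGraph.Walk ES.emptyConfig u)
    (q : ES.configGraph.Walk ES.emptyConfig v)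
    (hp : p.length = ES.configGraph.dist ES.emptyConfig u)
    (hq : q.length = ES.configGraph.dist ES.emptyConfig v) :
    (∃ w w' : List A, TraceEquiv I (walkWord lab p) w ∧
        TraceEquiv I (walkWord lab q) w' ∧ w <+: w') ↔
      u ∈ mInterval ES.configGraph ES.emptyConfig v := by
  classical
  have hbot : ∀ c : ES.Config, symmDiff (ES.emptyConfig.1 : Finset E) c.1 = c.1 := by
    intro c
    show symmDiff (∅ : Finset E) c.1 = c.1
    rw [← Finset.bot_eq_empty, bot_symmDiff]
  have hdu : ES.configGraph.dist ES.emptyConfig u = u.1.card := by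
    rw [config_dist lab, hbot]
  have hdv : ES.configGraph.dist ES.emptyConfig v = v.1.card := by
    rw [config_dist lab, hbot]
  have hp' : p.length = (u.1 \ (ES.emptyConfig.1 : Finset E)).card := by
    rw [hp, hdu]
    show _ = (u.1 \ (∅ : Finset E)).card
    rw [Finset.sdiff_empty]
  have hq' : q.length = (v.1 \ (ES.emptyConfig.1 : Finset E)).card := by
    rw [hq, hdv]
    show _ = (v.1 \ (∅ : Finset E)).card
    rw [Finset.sdiff_empty]
  obtain ⟨esp, hesp, hgrow_p, hword_p⟩ :=
    walk_to_stepseq lab p (Finset.empty_subset _) hp'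
  obtain ⟨esq, hesq, hgrow_q, hword_q⟩ :=
    walk_to_stepseq lab q (Finset.empty_subset _) hq'
  have hesp' : StepSeq ES (∅ : Finset E) esp := hesp
  have hesq' : StepSeq ES (∅ : Finset E) esq := hesq
  have hgrow_p' : grow (∅ : Finset E) esp = u.1 := hgrow_p
  have hgrow_q' : grow (∅ : Finset E) esq = v.1 := hgrow_q
  have hfin_p : esp.toFinset = u.1 := by rw [← grow_empty_eq, hgrow_p']
  have hfin_q : esq.toFinset = v.1 := by rw [← grow_empty_eq, hgrow_q']
  constructor
  · rintro ⟨w, w', hw, hw', hpre⟩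
    obtain ⟨esw, hesw, hmapw, hfinw⟩ :=
      hesp'.of_traceEquiv (w := w) hlab (by rw [hword_p]; exact hw)
    obtain ⟨esv, hesv, hmapv, hfinv⟩ :=
      hesq'.of_traceEquiv (w := w') hlab (by rw [hword_q]; exact hw')
    obtain ⟨t, ht⟩ := hpre
    have hsplit : esv.map lab = w ++ t := by rw [hmapv, ht]
    obtain ⟨l1, l2, rfl, hl1, hl2⟩ := List.map_eq_append_iff.1 hsplit
    have hl1seq : StepSeq ES (∅ : Finset E) l1 := (StepSeq.append_iff.1 hesv).1
    have heq : l1 = esw :=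
      StepSeq.unique hI_irrefl hlab hl1seq hesw (by rw [hl1, hmapw])
    have hsub : u.1 ⊆ v.1 := by
      intro x hx
      have hx1 : x ∈ esw.toFinset := by rw [hfinw, hfin_p]; exact hx
      rw [← heq] at hx1
      have hx2 : x ∈ (l1 ++ l2).toFinset := by
        simp only [List.mem_toFinset, List.mem_append] at hx1 ⊢
        exact Or.inl hx1
      rw [hfinv, hfin_q] at hx2
      exact hx2
    simp only [mInterval, Set.mem_setOf_eq]
    rw [hdu, hdv, config_dist lab u v]
    have hsd : symmDiff u.1 v.1 = v.1 \ u.1 :=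
      symmDiff_of_le (Finset.le_iff_subset.2 hsub)
    rw [hsd]
    have := Finset.card_sdiff_add_card_eq_card hsub
    omega
  · intro hmem
    simp only [mInterval, Set.mem_setOf_eq] at hmem
    rw [hdu, hdv, config_dist lab u v, symmDiff_card_eq] at hmem
    have hvle : v.1.card ≤ (v.1 \ u.1).card + u.1.card := by
      have hsub : v.1 ⊆ (v.1 \ u.1) ∪ u.1 := by
        intro x hx
        by_cases hxu : x ∈ u.1
        · exact Finset.mem_union_right _ hxu
        · exact Finset.mem_union_left _ (Finset.mem_sdiff.2 ⟨hx, hxu⟩)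
      calc v.1.card ≤ ((v.1 \ u.1) ∪ u.1).card := Finset.card_le_card hsub
        _ ≤ _ := Finset.card_union_le ..
    have hzero : (u.1 \ v.1).card = 0 := by omega
    have hsub : u.1 ⊆ v.1 :=
      Finset.sdiff_eq_empty_iff_subset.1 (Finset.card_eq_zero.1 hzero)
    obtain ⟨ext, hext, hgrow_ext⟩ :=
      exists_stepseq_of_subset (ES := ES) _ u.2 v.2 hsub rfl
    have hseqv : StepSeq ES (∅ : Finset E) (esp ++ ext) :=
      StepSeq.append_iff.2 ⟨hesp', by rw [hgrow_p']; exact hext⟩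
    refine ⟨esp.map lab, (esp ++ ext).map lab, ?_, ?_, ?_⟩
    · rw [hword_p]
    · rw [← hword_q]
      refine StepSeq.equiv hlab hI_symm hesq' hseqv ?_
      have h1 : (esp ++ ext).toFinset = v.1 := by
        rw [← grow_empty_eq, grow_append, hgrow_p', hgrow_ext]
      rw [hfin_q, h1]
    · exact ⟨ext.map lab, (List.map_append ..).symm⟩
end
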